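/- Let X be a compact geodesic space that is semi-locally simply connected, with basepoint •. Then every element of π₁(X, •) has a representative loop of finite length; moreover, for every non-nullhomotopic class there is a representative of minimal length among all rectifiable representatives, and this minimal length is strictly positive. -/

import Mathlib

attribute [local instance] Path.Homotopic.setoid

/-- The length of a path in a metric space, as its total variation. -/
noncomputable def pathLength {X : Type*} [MetricSpace X] {a b : X} (γ : Path a b) : ENNReal :=
  eVariationOn (fun t : ℝ => γ (Set.projIcc 0 1 zero_le_one t)) (Set.Icc 0 1)

/-!
There is `ε > 0` such that any two paths with common endpoints that stay in the `ε`-ball around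
their start are homotopic: take a Lebesgue number of the cover by balls on which loops are trivial,
and conjugate by geodesics from their centres. Sampling a path finely and joining consecutive
samples by geodesics gives a homotopic polygon that is no longer than the path, so every class has
a rectifiable representative. A vertex whose neighbours are closer than `ε / 4` can be deleted
without changing the class or increasing the length; once no vertex can be deleted, the number of
vertices is bounded in terms of the length. Hence the vertex tuples of near-minimizing polygons lie
in a fixed compact power `X ^ M`. Polygons with close vertices and short edges are homotopic, so a
minimizer of the continuous polygon length over the closure of these tuples is still in the class,
and its length is the infimum. Loops shorter than `ε` are nullhomotopic, so for a nontrivial class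
this minimum is positive.
-/

open Set Metric unitInterval
open scoped NNReal

lemma List.exists_ofFn_eq {α : Type*} {l : List α} {n : ℕ} (h : l.length = n) :
    ∃ v : Fin n → α, List.ofFn v = l := by
  subst h
  exact ⟨l.get, List.ofFn_get l⟩

lemma List.forall₂_ofFn {α β : Type*} {R : α → β → Prop} :
    ∀ {n : ℕ} {f : Fin n → α} {g : Fin n → β}, (∀ i, R (f i) (g i)) →
      List.Forall₂ R (List.ofFn f) (List.ofFn g)
  | 0, _, _, _ => by simp
  | _ + 1, _, _, h => by
    rw [List.ofFn_succ, List.ofFn_succ]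
    exact .cons (h 0) (List.forall₂_ofFn fun i => h i.succ)

lemma exists_mem_closure_le_of_forall_lt_add {Y : Type*} [TopologicalSpace Y] [CompactSpace Y]
    {K : Set Y} {f : Y → ℝ} (hf : Continuous f) {m : ℝ} (hK : ∀ δ > 0, ∃ v ∈ K, f v < m + δ) :
    ∃ w ∈ closure K, f w ≤ m := by
  obtain ⟨v₀, hv₀, -⟩ := hK 1 one_pos
  obtain ⟨w, hw, hmin⟩ :=
    isClosed_closure.isCompact.exists_isMinOn ⟨v₀, subset_closure hv₀⟩ hf.continuousOn
  refine ⟨w, hw, le_of_forall_pos_lt_add fun δ hδ => ?_⟩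
  obtain ⟨v, hv, hlt⟩ := hK δ hδ
  exact (hmin (subset_closure hv)).trans_lt hlt

section Homotopy

variable {X : Type*} [TopologicalSpace X] {x y z : X}

lemma Path.Homotopic.of_trans_symm {α γ : Path x y}
    (h : (α.trans γ.symm).Homotopic (Path.refl x)) : α.Homotopic γ := by
  rw [← Quotient.eq] at h ⊢
  simpa [Quotient.trans_assoc] using congrArg (Quotient.trans · (Quotient.mk γ)) h

lemma Path.Homotopic.of_trans_left {g : Path x y} {α γ : Path y z}
    (h : (g.trans α).Homotopic (g.trans γ)) : α.Homotopic γ := by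
  rw [← Quotient.eq] at h ⊢
  simpa [← Quotient.trans_assoc] using congrArg (Quotient.trans (Quotient.mk g).symm) h

lemma homotopic_of_range_subset {U : Set X}
    (hU : ∀ β : Path x x, range β ⊆ U → β.Homotopic (Path.refl x)) {α γ : Path x y}
    (hα : range α ⊆ U) (hγ : range γ ⊆ U) : α.Homotopic γ :=
  .of_trans_symm <| hU _ <| by
    rw [Path.trans_range, Path.symm_range]
    exact union_subset hα hγ

end Homotopy

section

variable {X : Type*} [MetricSpace X] {a b c : X}

lemma edist_le_pathLength (γ : Path a b) (s t : I) : edist (γ s) (γ t) ≤ pathLength γ := by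
  have h := eVariationOn.edist_le γ.extend s.2 t.2
  rwa [Path.extend_extends', Path.extend_extends'] at h

lemma ofReal_dist_le_eVariationOn_extend (γ : Path a b) {s t : I} (hst : s ≤ t) :
    ENNReal.ofReal (dist (γ s) (γ t)) ≤ eVariationOn γ.extend (Icc s t) := by
  have h := eVariationOn.edist_le γ.extend (left_mem_Icc.2 hst) (right_mem_Icc.2 hst)
  rwa [Path.extend_extends', Path.extend_extends', edist_dist] at h

lemma range_subset_ball_of_pathLength_lt {γ : Path a b} {r : ℝ}
    (h : pathLength γ < ENNReal.ofReal r) : range γ ⊆ ball a r := by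
  rintro _ ⟨t, rfl⟩
  rw [mem_ball, ← edist_lt_ofReal]
  simpa using (edist_le_pathLength γ t 0).trans_lt h

lemma pathLength_le_of_lipschitzWith {γ : Path a b} {K : ℝ≥0} (hγ : LipschitzWith K γ) :
    pathLength γ ≤ K := by
  have hext : LipschitzWith K γ.extend := by
    have h := hγ.comp (LipschitzWith.projIcc (zero_le_one' ℝ))
    rwa [mul_one] at h
  calc pathLength γ = eVariationOn (γ.extend ∘ id) (Icc 0 1) := rfl
    _ ≤ K * eVariationOn id (Icc (0 : ℝ) 1) :=
      (hext.lipschitzOnWith (s := univ)).comp_eVariationOn_le (mapsTo_univ _ _)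
    _ = K := by
      rw [← inter_self (Icc (0 : ℝ) 1), monotoneOn_id.eVariationOn_eq
        (left_mem_Icc.2 zero_le_one) (right_mem_Icc.2 zero_le_one)]
      simp

lemma pathLength_refl (x : X) : pathLength (Path.refl x) = 0 :=
  nonpos_iff_eq_zero.1 <| by
    simpa using pathLength_le_of_lipschitzWith (γ := Path.refl x) (LipschitzWith.const x)

lemma pathLength_trans_le (p : Path a b) (q : Path b c) :
    pathLength (p.trans q) ≤ pathLength p + pathLength q := by
  have hsplit := eVariationOn.Icc_add_Icc (p.trans q).extend (s := univ)
    (by norm_num : (0 : ℝ) ≤ 1 / 2) (by norm_num : (1 / 2 : ℝ) ≤ 1) (mem_univ _)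
  simp only [univ_inter] at hsplit
  change eVariationOn (p.trans q).extend (Icc 0 1) ≤ _
  rw [← hsplit]
  gcongr
  · calc eVariationOn (p.trans q).extend (Icc 0 (1 / 2))
        = eVariationOn (p.extend ∘ (2 * ·)) (Icc 0 (1 / 2)) :=
          eVariationOn.eq_of_eqOn fun t ht => Path.extend_trans_of_le_half p q ht.2
      _ ≤ pathLength p := eVariationOn.comp_le_of_monotoneOn _ _
          (fun s _ t _ hst => by linarith)
          (fun t ht => ⟨by linarith [ht.1], by linarith [ht.2]⟩)
  · calc eVariationOn (p.trans q).extend (Icc (1 / 2) 1)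
        = eVariationOn (q.extend ∘ (2 * · - 1)) (Icc (1 / 2) 1) :=
          eVariationOn.eq_of_eqOn fun t ht => Path.extend_trans_of_half_le p q ht.1
      _ ≤ pathLength q := eVariationOn.comp_le_of_monotoneOn _ _
          (fun s _ t _ hst => by linarith)
          (fun t ht => ⟨by linarith [ht.1], by linarith [ht.2]⟩)

lemma exists_path_pathLength_le_of_isometryOn {x y : X} {γ : ℝ → X} (h0 : γ 0 = x)
    (h1 : γ (dist x y) = y)
    (hγ : ∀ s ∈ Icc 0 (dist x y), ∀ t ∈ Icc 0 (dist x y), dist (γ s) (γ t) = |s - t|) :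
    ∃ p : Path x y, pathLength p ≤ edist x y := by
  have hmem : ∀ t : I, (t : ℝ) * dist x y ∈ Icc 0 (dist x y) := fun t =>
    ⟨mul_nonneg t.2.1 dist_nonneg, mul_le_of_le_one_left dist_nonneg t.2.2⟩
  have hlip : LipschitzWith (nndist x y) fun t : I => γ (t * dist x y) := by
    refine LipschitzWith.of_dist_le_mul fun s t => le_of_eq ?_
    rw [hγ _ (hmem s) _ (hmem t), coe_nndist, Subtype.dist_eq, Real.dist_eq, ← sub_mul, abs_mul,
      abs_of_nonneg dist_nonneg, mul_comm]
  refine ⟨⟨⟨fun t => γ (t * dist x y), hlip.continuous⟩, by simp [h0], by simp [h1]⟩, ?_⟩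
  rw [edist_nndist]
  exact pathLength_le_of_lipschitzWith hlip

def SmallPathsHomotopic (X : Type*) [MetricSpace X] (ε : ℝ) : Prop :=
  ∀ ⦃u v : X⦄ (α γ : Path u v), range α ⊆ ball u ε → range γ ⊆ ball u ε → α.Homotopic γ

lemma SmallPathsHomotopic.mono {ε ε' : ℝ} (hε : SmallPathsHomotopic X ε) (h : ε' ≤ ε) :
    SmallPathsHomotopic X ε' := fun _ _ α γ hα hγ =>
  hε α γ (hα.trans (ball_subset_ball h)) (hγ.trans (ball_subset_ball h))

lemma SmallPathsHomotopic.of_pathLength_lt {ε : ℝ} (hε : SmallPathsHomotopic X ε)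
    {α γ : Path a b} (hα : pathLength α < ENNReal.ofReal ε)
    (hγ : pathLength γ < ENNReal.ofReal ε) : α.Homotopic γ :=
  hε α γ (range_subset_ball_of_pathLength_lt hα) (range_subset_ball_of_pathLength_lt hγ)

lemma SmallPathsHomotopic.homotopic_refl_of_pathLength_lt {ε : ℝ} (hε : SmallPathsHomotopic X ε)
    {γ : Path a a} (h : pathLength γ < ENNReal.ofReal ε) : γ.Homotopic (Path.refl a) :=
  hε.of_pathLength_lt h <| by
    rw [pathLength_refl]
    exact pos_of_gt h

structure ShortestPaths (X : Type*) [MetricSpace X] where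
  path : ∀ x y : X, Path x y
  pathLength_le : ∀ x y, pathLength (path x y) ≤ edist x y

namespace ShortestPaths

variable (G : ShortestPaths X)

lemma range_path_subset (x y : X) : range (G.path x y) ⊆ closedBall x (dist x y) := by
  rintro _ ⟨t, rfl⟩
  have h := (edist_le_pathLength (G.path x y) t 0).trans (G.pathLength_le x y)
  rwa [Path.source, edist_dist, edist_dist, ENNReal.ofReal_le_ofReal_iff dist_nonneg] at h

lemma path_self (x : X) : G.path x x = Path.refl x := by
  ext t
  simpa using G.range_path_subset x x (mem_range_self t)

end ShortestPaths

lemma exists_smallPathsHomotopic [CompactSpace X] (G : ShortestPaths X)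
    (hslsc : ∀ x : X, ∃ U ∈ nhds x, ∀ β : Path x x, range β ⊆ U → β.Homotopic (Path.refl x)) :
    ∃ ε > 0, SmallPathsHomotopic X ε := by
  choose U hU hnull using hslsc
  choose r hr hrU using fun x => Metric.mem_nhds_iff.1 (hU x)
  obtain ⟨δ, hδ, hleb⟩ := lebesgue_number_lemma_of_metric isCompact_univ
    (c := fun x => ball x (r x)) (fun _ => isOpen_ball)
    (fun y _ => mem_iUnion.2 ⟨y, mem_ball_self (hr y)⟩)
  refine ⟨δ, hδ, fun u v α γ hα hγ => ?_⟩
  obtain ⟨x, hx⟩ := hleb u (mem_univ u)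
  have hg : range (G.path x u) ⊆ ball x (r x) :=
    (G.range_path_subset x u).trans <| closedBall_subset_ball <| by
      rw [dist_comm]; exact hx (mem_ball_self hδ)
  refine Path.Homotopic.of_trans_left (g := G.path x u) <|
    homotopic_of_range_subset (fun β hβ => hnull x β (hβ.trans (hrU x))) ?_ ?_
  · rw [Path.trans_range]; exact union_subset hg (hα.trans hx)
  · rw [Path.trans_range]; exact union_subset hg (hγ.trans hx)

def chainLength : X → List X → X → ℝ
  | a, [], b => dist a b
  | a, c :: l, b => dist a c + chainLength c l b

def EdgesLT (r : ℝ) : X → List X → X → Prop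
  | a, [], b => dist a b < r
  | a, c :: l, b => dist a c < r ∧ EdgesLT r c l b

/-- No interior vertex can be skipped: the two neighbours of each one are at distance `≥ r`. -/
def NoShortcuts (r : ℝ) : X → List X → X → Prop
  | _, [], _ => True
  | a, c :: l, b => r ≤ dist a (l.headD b) ∧ NoShortcuts r c l b

lemma chainLength_nonneg : ∀ (a : X) (l : List X), 0 ≤ chainLength a l b
  | _, [] => dist_nonneg
  | _, c :: l => add_nonneg dist_nonneg (chainLength_nonneg c l)

lemma chainLength_le_dist_add_chainLength (a c : X) :
    ∀ l : List X, chainLength a l b ≤ dist a c + chainLength c l b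
  | [] => dist_triangle a c b
  | d :: l => by
    simp only [chainLength]
    linarith [dist_triangle a c d]

lemma length_mul_add_dist_le_of_noShortcuts {r : ℝ} :
    ∀ {a : X} {l : List X}, NoShortcuts r a l b →
      l.length * r + dist a (l.headD b) ≤ 2 * chainLength a l b
  | a, [], _ => by
    simp only [List.length_nil, CharP.cast_eq_zero, zero_mul, List.headD_nil, zero_add, chainLength]
    linarith [dist_nonneg (x := a) (y := b)]
  | a, c :: l, ⟨hskip, hred⟩ => by
    have ih := length_mul_add_dist_le_of_noShortcuts hred
    have htri := dist_triangle a c (l.headD b)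
    simp only [List.length_cons, List.headD_cons, chainLength]
    push_cast
    linarith [dist_nonneg (x := a) (y := c)]

lemma chainLength_replicate_append (a : X) (l : List X) :
    ∀ k, chainLength a (List.replicate k a ++ l) b = chainLength a l b
  | 0 => rfl
  | k + 1 => by
    simp only [List.replicate_succ, List.cons_append, chainLength, dist_self, zero_add]
    exact chainLength_replicate_append a l k

lemma continuous_chainLength_ofFn (b : X) :
    ∀ M : ℕ, Continuous fun p : X × (Fin M → X) => chainLength p.1 (List.ofFn p.2) b
  | 0 => by simpa [chainLength] using continuous_fst.dist continuous_const
  | M + 1 => by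
    simp only [List.ofFn_succ, chainLength]
    have hshift : Continuous fun p : X × (Fin (M + 1) → X) =>
        (p.2 0, fun i : Fin M => p.2 i.succ) := by
      fun_prop
    exact (continuous_fst.dist (by fun_prop)).add ((continuous_chainLength_ofFn b M).comp hshift)

lemma EdgesLT.mono {r r' : ℝ} (hr : r ≤ r') :
    ∀ {a : X} {l : List X}, EdgesLT r a l b → EdgesLT r' a l b
  | _, [], h => h.trans_le hr
  | _, _ :: _, h => ⟨h.1.trans_le hr, h.2.mono hr⟩

lemma EdgesLT.dist_headD_lt {r : ℝ} {a : X} :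
    ∀ {l : List X}, EdgesLT r a l b → dist a (l.headD b) < r
  | [], h => h
  | _ :: _, h => h.1

lemma EdgesLT.of_dist_headD_lt {r : ℝ} {a c : X} :
    ∀ {l : List X}, dist a (l.headD b) < r → EdgesLT r c l b → EdgesLT r a l b
  | [], h, _ => h
  | _ :: _, h, hE => ⟨h, hE.2⟩

lemma EdgesLT.replicate_append {r : ℝ} (hr : 0 < r) {a : X} {l : List X}
    (h : EdgesLT r a l b) : ∀ k, EdgesLT r a (List.replicate k a ++ l) b
  | 0 => h
  | k + 1 => ⟨by simpa using hr, h.replicate_append hr k⟩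

lemma EdgesLT.of_forall₂ {r δ : ℝ} :
    ∀ {a a' b' : X} {l l' : List X}, List.Forall₂ (fun x y => dist x y < δ) l l' →
      dist a a' < δ → dist b b' < δ → EdgesLT r a l b → EdgesLT (r + 2 * δ) a' l' b'
  | a, a', b', [], [], .nil, ha, hb, hE => by
    simp only [EdgesLT] at hE ⊢
    linarith [dist_triangle4 a' a b b', dist_comm a a']
  | a, a', b', x :: l, y :: l', .cons hxy hll', ha, hb, ⟨hE, hE'⟩ =>
    ⟨by linarith [dist_triangle4 a' a x y, dist_comm a a'], hE'.of_forall₂ hll' hxy hb⟩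

def FineSampling (γ : Path a b) (r : ℝ) : I → List I → I → Prop
  | s, [], u => s ≤ u ∧ γ '' Icc s u ⊆ ball (γ s) r
  | s, t :: ts, u => (s ≤ t ∧ γ '' Icc s t ⊆ ball (γ s) r) ∧ FineSampling γ r t ts u

namespace FineSampling

variable {γ : Path a b} {r : ℝ}

lemma le : ∀ {s u : I} {ts : List I}, FineSampling γ r s ts u → s ≤ u
  | _, _, [], h => h.1
  | _, _, _ :: _, h => h.1.1.trans (le h.2)

lemma edgesLT : ∀ {s u : I} {ts : List I}, FineSampling γ r s ts u →
    EdgesLT r (γ s) (ts.map γ) (γ u)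
  | _, _, [], h => by
    rw [List.map_nil, EdgesLT, dist_comm]
    exact h.2 (mem_image_of_mem γ (right_mem_Icc.2 h.1))
  | _, _, _ :: _, h => ⟨by
    rw [dist_comm]
    exact h.1.2 (mem_image_of_mem γ (right_mem_Icc.2 h.1.1)), edgesLT h.2⟩

lemma chainLength_le : ∀ {s u : I} {ts : List I}, FineSampling γ r s ts u →
    ENNReal.ofReal (chainLength (γ s) (ts.map γ) (γ u)) ≤ eVariationOn γ.extend (Icc s u)
  | _, _, [], h => ofReal_dist_le_eVariationOn_extend γ h.1
  | s, u, t :: _, h => by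
    have hsplit := eVariationOn.Icc_add_Icc γ.extend (s := univ) (h.1.1 : (s : ℝ) ≤ t)
      (le h.2 : (t : ℝ) ≤ u) (mem_univ _)
    simp only [univ_inter] at hsplit
    rw [List.map_cons, chainLength, ENNReal.ofReal_add dist_nonneg (chainLength_nonneg _ _),
      ← hsplit]
    exact add_le_add (ofReal_dist_le_eVariationOn_extend γ h.1.1) (chainLength_le h.2)

end FineSampling

lemma exists_fineSampling (γ : Path a b) {r : ℝ} (hr : 0 < r) :
    ∃ ts, FineSampling γ r 0 ts 1 := by
  obtain ⟨δ, hδ, hγδ⟩ := Metric.uniformContinuous_iff.1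
    (CompactSpace.uniformContinuous_of_continuous γ.continuous) r hr
  have hpiece : ∀ s u : I, s ≤ u → (u : ℝ) - s < δ → γ '' Icc s u ⊆ ball (γ s) r := by
    rintro s u - hsu _ ⟨τ, hτ, rfl⟩
    refine hγδ ?_
    have hsτ : (s : ℝ) ≤ τ := hτ.1
    have hτu : (τ : ℝ) ≤ u := hτ.2
    rw [Subtype.dist_eq, Real.dist_eq, abs_of_nonneg (by linarith)]
    linarith
  have hsteps : ∀ N : ℕ, ∀ s : I, 1 - (s : ℝ) ≤ N * (δ / 2) → ∃ ts, FineSampling γ r s ts 1 := by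
    intro N
    induction N with
    | zero =>
      intro s hs
      exact ⟨[], le_one s, hpiece s 1 (le_one s) (by rw [Icc.coe_one]; push_cast at hs; linarith)⟩
    | succ N ih =>
      intro s hs
      by_cases hlast : 1 - (s : ℝ) < δ
      · exact ⟨[], le_one s, hpiece s 1 (le_one s) hlast⟩
      set t : I := ⟨s + δ / 2, by linarith [s.2.1], by linarith⟩
      have hst : s ≤ t := Subtype.mk_le_mk.2 (by linarith)
      obtain ⟨ts, hts⟩ := ih t (by simp only [t]; push_cast at hs; linarith)
      exact ⟨t :: ts, ⟨hst, hpiece s t hst (by simp only [t]; linarith)⟩, hts⟩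
  obtain ⟨N, hN⟩ := exists_nat_ge (2 / δ)
  exact hsteps N 0 (by
    rw [div_le_iff₀ hδ] at hN
    simp only [Icc.coe_zero, sub_zero]
    linarith)

namespace ShortestPaths

variable (G : ShortestPaths X) {ε : ℝ}

noncomputable def polygon : (a : X) → List X → (b : X) → Path a b
  | a, [], b => G.path a b
  | a, c :: l, b => (G.path a c).trans (polygon c l b)

lemma pathLength_polygon_le : ∀ (a : X) (l : List X),
    pathLength (G.polygon a l b) ≤ ENNReal.ofReal (chainLength a l b)
  | a, [] => by simpa [polygon, chainLength, edist_dist] using G.pathLength_le a b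
  | a, c :: l => by
    rw [polygon, chainLength, ENNReal.ofReal_add dist_nonneg (chainLength_nonneg _ _),
      ← edist_dist]
    exact (pathLength_trans_le _ _).trans (add_le_add (G.pathLength_le a c)
      (pathLength_polygon_le c l))

lemma pathLength_polygon_lt_top (a : X) (l : List X) : pathLength (G.polygon a l b) < ⊤ :=
  (G.pathLength_polygon_le a l).trans_lt ENNReal.ofReal_lt_top

lemma pathLength_polygon_lt {r : ℝ} {a : X} {l : List X} (h : chainLength a l b < r) :
    pathLength (G.polygon a l b) < ENNReal.ofReal r :=
  (G.pathLength_polygon_le a l).trans_lt <|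
    (ENNReal.ofReal_lt_ofReal_iff_of_nonneg (chainLength_nonneg a l)).2 h

lemma polygon_cons_homotopic (hε : SmallPathsHomotopic X ε) {a c : X} {l : List X}
    (h : dist a c + dist c (l.headD b) < ε) :
    (G.polygon a (c :: l) b).Homotopic (G.polygon a l b) := by
  have hshort : ∀ {d}, dist a c + dist c d < ε →
      ((G.path a c).trans (G.path c d)).Homotopic (G.path a d) := fun hd =>
    hε.of_pathLength_lt (G.pathLength_polygon_lt (l := [c]) hd)
      (G.pathLength_polygon_lt (l := []) ((dist_triangle _ _ _).trans_lt hd))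
  cases l with
  | nil => exact hshort h
  | cons d l =>
    exact (Path.Homotopic.trans_assoc _ _ _).symm.trans (.hcomp (hshort h) (.refl _))

lemma exists_shortcut (hε : SmallPathsHomotopic X ε) {e : ℝ} (he : 2 * e ≤ ε) :
    ∀ {a : X} {l : List X}, EdgesLT e a l b → ¬ NoShortcuts e a l b →
      ∃ l', l'.length < l.length ∧ EdgesLT e a l' b ∧ chainLength a l' b ≤ chainLength a l b ∧
        (G.polygon a l b).Homotopic (G.polygon a l' b)
  | _, [], _, hred => absurd trivial hred
  | a, c :: l, hE, hred => by
    by_cases hskip : dist a (l.headD b) < e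
    · refine ⟨l, by simp, hE.2.of_dist_headD_lt hskip, chainLength_le_dist_add_chainLength a c l,
        G.polygon_cons_homotopic hε ?_⟩
      linarith [hE.1, hE.2.dist_headD_lt]
    · obtain ⟨l', hlen, hE', hle, hhom⟩ :=
        exists_shortcut hε he hE.2 fun h => hred ⟨not_lt.1 hskip, h⟩
      refine ⟨c :: l', by simpa using hlen, ⟨hE.1, hE'⟩, by simp only [chainLength]; linarith,
        .hcomp (.refl _) hhom⟩

lemma exists_noShortcuts (hε : SmallPathsHomotopic X ε) {e : ℝ} (he : 2 * e ≤ ε) {a : X}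
    {l : List X} (hE : EdgesLT e a l b) :
    ∃ l', NoShortcuts e a l' b ∧ EdgesLT e a l' b ∧ chainLength a l' b ≤ chainLength a l b ∧
      (G.polygon a l b).Homotopic (G.polygon a l' b) := by
  induction hn : l.length using Nat.strong_induction_on generalizing l with
  | _ n ih =>
    by_cases hred : NoShortcuts e a l b
    · exact ⟨l, hred, hE, le_rfl, .refl _⟩
    obtain ⟨l₁, hlen₁, hE₁, hle₁, hhom₁⟩ := G.exists_shortcut hε he hE hred
    obtain ⟨l₂, hred₂, hE₂, hle₂, hhom₂⟩ := ih _ (hn ▸ hlen₁) hE₁ rfl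
    exact ⟨l₂, hred₂, hE₂, hle₂.trans hle₁, hhom₁.trans hhom₂⟩

lemma polygon_replicate_append_homotopic (a : X) (l : List X) :
    ∀ k, (G.polygon a (List.replicate k a ++ l) b).Homotopic (G.polygon a l b)
  | 0 => .refl _
  | k + 1 => by
    simp only [List.replicate_succ, List.cons_append, polygon, path_self]
    exact (Path.Homotopic.refl_trans _).trans (polygon_replicate_append_homotopic a l k)

lemma trans_polygon_homotopic_polygon_trans (hε : SmallPathsHomotopic X ε) {δ r : ℝ}
    (hδr : δ + r ≤ ε) :
    ∀ {a a' b' : X} {l l' : List X}, List.Forall₂ (fun x y => dist x y < δ) l l' →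
      dist a a' < δ → dist b b' < δ → EdgesLT r a l b → EdgesLT r a' l' b' →
      ((G.path a a').trans (G.polygon a' l' b')).Homotopic
        ((G.polygon a l b).trans (G.path b b'))
  | a, a', b', [], [], .nil, ha, hb, hE, hE' =>
    hε.of_pathLength_lt (G.pathLength_polygon_lt (l := [a']) (by
        simp only [chainLength, EdgesLT] at hE' ⊢; linarith))
      (G.pathLength_polygon_lt (l := [b]) (by simp only [chainLength, EdgesLT] at hE ⊢; linarith))
  | a, a', b', x :: l, y :: l', .cons hxy hll', ha, hb, ⟨hE, hEl⟩, ⟨hE', hEl'⟩ => by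
    have hsquare : ((G.path a a').trans (G.path a' y)).Homotopic
        ((G.path a x).trans (G.path x y)) :=
      hε.of_pathLength_lt (G.pathLength_polygon_lt (l := [a']) (by
          simp only [chainLength]; linarith))
        (G.pathLength_polygon_lt (l := [x]) (by simp only [chainLength]; linarith))
    have ih := trans_polygon_homotopic_polygon_trans hε hδr hll' hxy hb hEl hEl'
    exact (Path.Homotopic.trans_assoc _ _ _).symm.trans <| (hsquare.hcomp (.refl _)).trans <|
      (Path.Homotopic.trans_assoc _ _ _).trans <| ((Path.Homotopic.refl _).hcomp ih).trans
        (Path.Homotopic.trans_assoc _ _ _).symm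

lemma polygon_homotopic_of_forall₂ (hε : SmallPathsHomotopic X ε) {δ r : ℝ} (hδ : 0 < δ)
    (hδr : δ + r ≤ ε) {a : X} {l l' : List X}
    (hll' : List.Forall₂ (fun x y => dist x y < δ) l l') (hE : EdgesLT r a l b)
    (hE' : EdgesLT r a l' b) : (G.polygon a l b).Homotopic (G.polygon a l' b) := by
  have h := G.trans_polygon_homotopic_polygon_trans hε hδr hll' (by simpa using hδ)
    (by simpa using hδ) hE hE'
  rw [path_self, path_self] at h
  exact ((Path.Homotopic.trans_refl _).symm.trans
    (h.symm.trans (Path.Homotopic.refl_trans _)))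

lemma subpath_homotopic_path (hε : SmallPathsHomotopic X ε) {γ : Path a b} {s u : I}
    (hsu : s ≤ u) (hsmall : γ '' Icc s u ⊆ ball (γ s) ε) :
    (γ.subpath s u).Homotopic (G.path (γ s) (γ u)) :=
  hε _ _ (by rwa [Path.range_subpath_of_le _ _ _ hsu]) <|
    (G.range_path_subset _ _).trans <| closedBall_subset_ball <| by
      rw [dist_comm]; exact hsmall (mem_image_of_mem γ (right_mem_Icc.2 hsu))

lemma subpath_homotopic_polygon (hε : SmallPathsHomotopic X ε) {γ : Path a b} :
    ∀ {s u : I} {ts : List I}, FineSampling γ ε s ts u →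
      (γ.subpath s u).Homotopic (G.polygon (γ s) (ts.map γ) (γ u))
  | _, _, [], h => G.subpath_homotopic_path hε h.1 h.2
  | s, u, t :: _, h =>
    (Path.Homotopic.symm ⟨Path.Homotopy.subpathTransSubpath γ s t u⟩).trans <|
      (G.subpath_homotopic_path hε h.1.1 h.1.2).hcomp (subpath_homotopic_polygon hε h.2)

lemma exists_polygon_homotopic (hε : SmallPathsHomotopic X ε) (hε₀ : 0 < ε) (β : Path a b) :
    ∃ l, EdgesLT ε a l b ∧ ENNReal.ofReal (chainLength a l b) ≤ pathLength β ∧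
      β.Homotopic (G.polygon a l b) := by
  obtain ⟨ts, hts⟩ := exists_fineSampling β hε₀
  have hhom := G.subpath_homotopic_polygon hε hts
  rw [Path.subpath_zero_one] at hhom
  have hE := hts.edgesLT
  have hlen := hts.chainLength_le
  simp only [Path.source, Path.target, Icc.coe_zero, Icc.coe_one] at hE hlen
  have hcast : ∀ {a' b'} (ha : a' = a) (hb : b' = b),
      (β.cast ha hb).Homotopic (G.polygon a' (ts.map β) b') →
        β.Homotopic (G.polygon a (ts.map β) b) := by
    rintro _ _ rfl rfl h
    exact h
  exact ⟨ts.map β, hE, hlen, hcast _ _ hhom⟩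

lemma exists_polygon_noShortcuts_homotopic (hε : SmallPathsHomotopic X ε) {e : ℝ} (he : 0 < e)
    (heε : 2 * e ≤ ε) (β : Path a b) :
    ∃ l, NoShortcuts e a l b ∧ EdgesLT e a l b ∧
      ENNReal.ofReal (chainLength a l b) ≤ pathLength β ∧ β.Homotopic (G.polygon a l b) := by
  obtain ⟨l₀, hE₀, hlen₀, hhom₀⟩ := G.exists_polygon_homotopic (hε.mono (by linarith)) he β
  obtain ⟨l, hred, hE, hle, hhom⟩ := G.exists_noShortcuts hε heε hE₀
  exact ⟨l, hred, hE, (ENNReal.ofReal_le_ofReal hle).trans hlen₀, hhom₀.trans hhom⟩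

lemma exists_ofFn_homotopic {e D : ℝ} (he : 0 < e) {M : ℕ} (hM : 2 * D / e ≤ M) {l : List X}
    (hred : NoShortcuts e a l b) (hE : EdgesLT e a l b) (hD : chainLength a l b ≤ D) :
    ∃ v : Fin M → X, EdgesLT e a (List.ofFn v) b ∧
      chainLength a (List.ofFn v) b = chainLength a l b ∧
      (G.polygon a l b).Homotopic (G.polygon a (List.ofFn v) b) := by
  have hlen : l.length ≤ M := by
    have hcount := length_mul_add_dist_le_of_noShortcuts hred
    rw [div_le_iff₀ he] at hM
    have : (l.length : ℝ) * e ≤ M * e := by linarith [dist_nonneg (x := a) (y := l.headD b)]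
    exact_mod_cast le_of_mul_le_mul_right this he
  obtain ⟨v, hv⟩ := List.exists_ofFn_eq (n := M) (l := List.replicate (M - l.length) a ++ l)
    (by simp only [List.length_append, List.length_replicate]; omega)
  refine ⟨v, ?_⟩
  rw [hv]
  exact ⟨hE.replicate_append he _, chainLength_replicate_append a l _,
    (G.polygon_replicate_append_homotopic a l _).symm⟩

lemma polygon_ofFn_homotopic (hε : SmallPathsHomotopic X ε) {e : ℝ} (he : 0 < e)
    (heε : 4 * e ≤ ε) {M : ℕ} {v w : Fin M → X} (hv : EdgesLT e a (List.ofFn v) b)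
    (hvw : dist v w < e / 2) :
    (G.polygon a (List.ofFn v) b).Homotopic (G.polygon a (List.ofFn w) b) := by
  have hclose : List.Forall₂ (fun x y => dist x y < e / 2) (List.ofFn v) (List.ofFn w) :=
    List.forall₂_ofFn fun i => (dist_le_pi_dist v w i).trans_lt hvw
  have hw : EdgesLT (e + 2 * (e / 2)) a (List.ofFn w) b :=
    hv.of_forall₂ hclose (by simpa using half_pos he) (by simpa using half_pos he)
  exact G.polygon_homotopic_of_forall₂ hε (half_pos he) (by linarith) hclose
    (hv.mono (by linarith)) hw

theorem exists_shortest_polygon [CompactSpace X] (hε : SmallPathsHomotopic X ε) (hε₀ : 0 < ε)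
    (β₀ : Path a b) :
    ∃ l, β₀.Homotopic (G.polygon a l b) ∧
      ∀ β : Path a b, β₀.Homotopic β → pathLength (G.polygon a l b) ≤ pathLength β := by
  -- room for merging two edges (`2 * e`) and for comparing polygons whose vertices are
  -- `e / 2`-close and whose edges are shorter than `2 * e`
  set e := ε / 4
  have he : 0 < e := by positivity
  have heε : 4 * e = ε := by ring
  set L := ⨅ (β : Path a b) (_ : β₀.Homotopic β), pathLength β
  have hL : L ≠ ⊤ := by
    obtain ⟨l₀, -, -, hhom₀⟩ := G.exists_polygon_homotopic hε hε₀ β₀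
    exact ne_top_of_le_ne_top (G.pathLength_polygon_lt_top a l₀).ne (iInf₂_le _ hhom₀)
  obtain ⟨M, hM⟩ := exists_nat_ge (2 * (L.toReal + 1) / e)
  set K : Set (Fin M → X) :=
    {v | EdgesLT e a (List.ofFn v) b ∧ β₀.Homotopic (G.polygon a (List.ofFn v) b)}
  have hK : ∀ δ > 0, ∃ v ∈ K, chainLength a (List.ofFn v) b < L.toReal + δ := by
    intro δ hδ
    set δ' := min δ 1
    have hδ' : 0 < δ' := lt_min hδ one_pos
    have hδ'δ : δ' ≤ δ := min_le_left δ 1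
    have hδ'1 : δ' ≤ 1 := min_le_right δ 1
    obtain ⟨β, hβ, hβL⟩ :
        ∃ β, β₀.Homotopic β ∧ pathLength β < ENNReal.ofReal (L.toReal + δ') := by
      have h := (ENNReal.lt_ofReal_iff_toReal_lt hL).2 (lt_add_of_pos_right L.toReal hδ')
      simpa only [L, iInf_lt_iff, exists_prop] using h
    obtain ⟨l, hred, hE, hlen, hhom⟩ :=
      G.exists_polygon_noShortcuts_homotopic hε he (by linarith) β
    have hlt : chainLength a l b < L.toReal + δ' :=
      (ENNReal.ofReal_lt_ofReal_iff_of_nonneg (chainLength_nonneg a l)).1 (hlen.trans_lt hβL)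
    obtain ⟨v, hvE, hvlen, hvhom⟩ :=
      G.exists_ofFn_homotopic he hM hred hE (by linarith)
    exact ⟨v, ⟨hvE, hβ.trans (hhom.trans hvhom)⟩, by linarith⟩
  obtain ⟨w, hwK, hwL⟩ := exists_mem_closure_le_of_forall_lt_add
    ((continuous_chainLength_ofFn b M).comp (continuous_const.prodMk continuous_id)) hK
  obtain ⟨v, hvK, hwv⟩ := Metric.mem_closure_iff.1 hwK (e / 2) (half_pos he)
  refine ⟨List.ofFn w, hvK.2.trans (G.polygon_ofFn_homotopic hε he heε.le hvK.1 ?_), ?_⟩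
  · rwa [dist_comm]
  · intro β hβ
    calc pathLength (G.polygon a (List.ofFn w) b)
        ≤ ENNReal.ofReal (chainLength a (List.ofFn w) b) := G.pathLength_polygon_le a _
      _ ≤ ENNReal.ofReal L.toReal := ENNReal.ofReal_le_ofReal hwL
      _ = L := ENNReal.ofReal_toReal hL
      _ ≤ pathLength β := iInf₂_le β hβ

end ShortestPaths

end

/-- In a compact, semi-locally simply connected geodesic space with basepoint `bp`, every
element of the fundamental group has a representative of finite length, and every nontrivial
element has a representative of minimal (and strictly positive) length among all
representatives. -/
theorem stmt_14 {X : Type*} [MetricSpace X] [CompactSpace X]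
    (hgeo : ∀ x y : X, ∃ γ : ℝ → X, γ 0 = x ∧ γ (dist x y) = y ∧
      ∀ s ∈ Set.Icc 0 (dist x y), ∀ t ∈ Set.Icc 0 (dist x y), dist (γ s) (γ t) = |s - t|)
    (hslsc : ∀ x : X, ∃ U ∈ nhds x, ∀ β : Path x x, (∀ t, β t ∈ U) →
      FundamentalGroup.fromPath ⟦β⟧ = (1 : FundamentalGroup (TopCat.of X) x))
    (bp : X) :
    (∀ g : FundamentalGroup (TopCat.of X) bp, ∃ β : Path bp bp,
      FundamentalGroup.fromPath ⟦β⟧ = g ∧ pathLength β < ⊤) ∧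
    (∀ g : FundamentalGroup (TopCat.of X) bp, g ≠ 1 → ∃ β : Path bp bp,
      FundamentalGroup.fromPath ⟦β⟧ = g ∧ 0 < pathLength β ∧
      ∀ β' : Path bp bp, FundamentalGroup.fromPath ⟦β'⟧ = g →
        pathLength β ≤ pathLength β') := by
  choose path hpath using fun x y : X =>
    let ⟨γ, h0, h1, hγ⟩ := hgeo x y
    exists_path_pathLength_le_of_isometryOn h0 h1 hγ
  let G : ShortestPaths X := ⟨path, hpath⟩
  obtain ⟨ε, hε₀, hε⟩ := exists_smallPathsHomotopic G fun x => by
    obtain ⟨U, hU, hnull⟩ := hslsc x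
    exact ⟨U, hU, fun β hβ => Quotient.exact (hnull β (range_subset_iff.1 hβ))⟩
  have hshortest : ∀ g : FundamentalGroup (TopCat.of X) bp, ∃ β : Path bp bp,
      FundamentalGroup.fromPath ⟦β⟧ = g ∧ pathLength β < ⊤ ∧
      ∀ β' : Path bp bp, FundamentalGroup.fromPath ⟦β'⟧ = g → pathLength β ≤ pathLength β' := by
    rintro ⟨β₀⟩
    obtain ⟨l, hhom, hmin⟩ := G.exists_shortest_polygon hε hε₀ β₀
    exact ⟨G.polygon bp l bp, Quotient.sound hhom.symm, G.pathLength_polygon_lt_top bp l,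
      fun β' hβ' => hmin β' (Quotient.exact hβ'.symm)⟩
  refine ⟨fun g => ?_, fun g hg => ?_⟩
  · obtain ⟨β, hβ, hfin, -⟩ := hshortest g
    exact ⟨β, hβ, hfin⟩
  · obtain ⟨β, hβ, -, hmin⟩ := hshortest g
    refine ⟨β, hβ, pos_iff_ne_zero.2 fun hzero => hg ?_, hmin⟩
    rw [← hβ]
    exact Quotient.sound (hε.homotopic_refl_of_pathLength_lt (by simpa [hzero] using hε₀))
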